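/- Let p be a positive integer, s ∈ ℝ^p a vector with nonnegative entries, and Ω, Ω₀ p×p real symmetric matrices such that both 2diag(s) − diag(s)Ωdiag(s) and 2diag(s) − diag(s)Ω₀diag(s) are positive semidefinite. Then for every subset S ⊆ {1,…,p}: (B^Ω_S)ᵀB^Ω_S − B_{0,S}ᵀB_{0,S} = −(diag(s)(Ω − Ω₀)diag(s))_{S,S}, and consequently ‖(B^Ω_S)ᵀB^Ω_S − B_{0,S}ᵀB_{0,S}‖₂ ≤ (max_j s_j)² · ‖Ω − Ω₀‖₂. If moreover Ω₀ is positive definite with Σ₀ = Ω₀⁻¹ positive definite and Σ₀ − (1/2)diag(s) positive semidefinite, then this bound is at most 4·Λmax(Σ₀)²·‖Ω − Ω₀‖₂. -/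

import Mathlib

open Matrix Finset
open scoped Classical BigOperators
open scoped Matrix.Norms.L2Operator

noncomputable section

/-- Spectral norm (ℓ2 operator norm) of a real matrix. -/
def specNorm {m n : Type*} [Fintype m] [Fintype n] [DecidableEq n]
    (A : Matrix m n ℝ) : ℝ :=
  ‖LinearMap.toContinuousLinearMap (Matrix.toEuclideanLin A)‖

/-- Largest eigenvalue (Rayleigh quotient sup) of a real symmetric matrix. -/
def lambdaMax {n : Type*} [Fintype n] (A : Matrix n n ℝ) : ℝ :=
  sSup {r | ∃ x : n → ℝ, ∑ i, (x i) ^ 2 = 1 ∧ r = x ⬝ᵥ A.mulVec x}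

/-- Positive semidefinite square root (0 if the matrix is not psd). -/
def msqrt {n : Type*} [Fintype n] [DecidableEq n] (A : Matrix n n ℝ) : Matrix n n ℝ :=
  if h : A.PosSemidef then (h.1.eigenvectorUnitary : Matrix n n ℝ) *
    Matrix.diagonal (((↑) : ℝ → ℝ) ∘ Real.sqrt ∘ h.1.eigenvalues) *
    (star h.1.eigenvectorUnitary : Matrix n n ℝ) else 0

/-- Column submatrix with columns in `S`. -/
def colSub {m p : Type*} (A : Matrix m p ℝ) (S : Finset p) : Matrix m {j // j ∈ S} ℝ :=
  A.submatrix id (fun j => (j : p))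

/-- Principal submatrix with rows and columns in `S`. -/
def prinSub {p : Type*} (A : Matrix p p ℝ) (S : Finset p) :
    Matrix {j // j ∈ S} {j // j ∈ S} ℝ :=
  A.submatrix (fun i => (i : p)) (fun j => (j : p))

/-- `B^Ω`, the psd square root of `2 diag(s) - diag(s) Ω diag(s)`. -/
def Bmat {p : ℕ} (s : Fin p → ℝ) (Om : Matrix (Fin p) (Fin p) ℝ) :
    Matrix (Fin p) (Fin p) ℝ :=
  msqrt ((2 : ℝ) • Matrix.diagonal s - Matrix.diagonal s * Om * Matrix.diagonal s)

/-! ### Auxiliary lemmas -/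

lemma msqrt_transpose {n : Type*} [Fintype n] [DecidableEq n] {A : Matrix n n ℝ}
    (h : A.PosSemidef) : (msqrt A)ᵀ = msqrt A := by
  rw [msqrt, dif_pos h, ← Matrix.conjTranspose_eq_transpose_of_trivial]
  simp [Matrix.conjTranspose_mul, Matrix.mul_assoc, Matrix.star_eq_conjTranspose]

lemma msqrt_mul_self {n : Type*} [Fintype n] [DecidableEq n] {A : Matrix n n ℝ}
    (h : A.PosSemidef) : msqrt A * msqrt A = A := by
  rw [msqrt, dif_pos h]
  have hU : (star h.1.eigenvectorUnitary : Matrix n n ℝ) * (h.1.eigenvectorUnitary : Matrix n n ℝ)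
      = 1 := Unitary.coe_star_mul_self _
  have hd : Matrix.diagonal (((↑) : ℝ → ℝ) ∘ Real.sqrt ∘ h.1.eigenvalues) *
      Matrix.diagonal (((↑) : ℝ → ℝ) ∘ Real.sqrt ∘ h.1.eigenvalues) =
      Matrix.diagonal (RCLike.ofReal ∘ h.1.eigenvalues) := by
    rw [Matrix.diagonal_mul_diagonal]
    congr 1
    funext i
    simp [Real.mul_self_sqrt (h.eigenvalues_nonneg i)]
  conv_rhs => rw [h.1.spectral_theorem, Unitary.conjStarAlgAut_apply, ← hd]
  simp only [Matrix.mul_assoc]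
  rw [← Matrix.mul_assoc (star _ : Matrix n n ℝ) (h.1.eigenvectorUnitary : Matrix n n ℝ), hU,
    Matrix.one_mul]

lemma specNorm_eq_norm {m n : Type*} [Fintype m] [Fintype n] [DecidableEq n]
    (A : Matrix m n ℝ) : specNorm A = ‖A‖ := rfl

/-- Selection matrix for the columns in `S`. -/
def selP {p : ℕ} (S : Finset (Fin p)) : Matrix (Fin p) {j // j ∈ S} ℝ :=
  (1 : Matrix (Fin p) (Fin p) ℝ).submatrix id (fun j => (j : Fin p))

lemma selP_transpose_mul_self {p : ℕ} (S : Finset (Fin p)) :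
    (selP S)ᵀ * selP S = 1 := by
  ext i j
  simp [selP, Matrix.mul_apply, Matrix.one_apply, Subtype.val_inj]

lemma norm_one_le' {k : Type*} [Fintype k] [DecidableEq k] :
    ‖(1 : Matrix k k ℝ)‖ ≤ 1 := by
  rw [Matrix.l2_opNorm_def]
  apply ContinuousLinearMap.opNorm_le_bound _ zero_le_one
  intro x
  simp [Matrix.toEuclideanLin_apply]

lemma norm_selP_le {p : ℕ} (S : Finset (Fin p)) : ‖selP S‖ ≤ 1 := by
  have h := Matrix.l2_opNorm_conjTranspose_mul_self (selP S)
  rw [Matrix.conjTranspose_eq_transpose_of_trivial, selP_transpose_mul_self] at h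
  have h1 : ‖(1 : Matrix {j // j ∈ S} {j // j ∈ S} ℝ)‖ ≤ 1 := norm_one_le'
  nlinarith [norm_nonneg (selP S)]

lemma norm_selP_transpose_eq {p : ℕ} (S : Finset (Fin p)) : ‖(selP S)ᵀ‖ = ‖selP S‖ := by
  rw [← Matrix.conjTranspose_eq_transpose_of_trivial]
  exact Matrix.l2_opNorm_conjTranspose _

lemma colSub_eq_mul {p : ℕ} (A : Matrix (Fin p) (Fin p) ℝ) (S : Finset (Fin p)) :
    colSub A S = A * selP S := by
  ext i j
  simp [colSub, selP, Matrix.mul_apply, Matrix.one_apply]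

lemma prinSub_eq_mul {p : ℕ} (M : Matrix (Fin p) (Fin p) ℝ) (S : Finset (Fin p)) :
    prinSub M S = (selP S)ᵀ * M * selP S := by
  ext i j
  simp [prinSub, selP, Matrix.mul_apply, Matrix.one_apply, Finset.mul_sum]

lemma norm_diagonal_le' {p : ℕ} (s : Fin p → ℝ) (c : ℝ) (hc0 : 0 ≤ c)
    (hcs : ∀ j, |s j| ≤ c) : ‖(Matrix.diagonal s : Matrix (Fin p) (Fin p) ℝ)‖ ≤ c := by
  rw [Matrix.l2_opNorm_def]
  apply ContinuousLinearMap.opNorm_le_bound _ hc0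
  intro x
  have hx : (LinearEquiv.trans (Matrix.toEuclideanLin) LinearMap.toContinuousLinearMap
      (Matrix.diagonal s)) x
      = (WithLp.equiv 2 (Fin p → ℝ)).symm
          ((Matrix.diagonal s) *ᵥ (WithLp.equiv 2 (Fin p → ℝ)) x) := rfl
  rw [hx, EuclideanSpace.norm_eq, EuclideanSpace.norm_eq]
  have key : ∑ i, ‖((WithLp.equiv 2 (Fin p → ℝ)).symm
        ((Matrix.diagonal s) *ᵥ (WithLp.equiv 2 (Fin p → ℝ)) x)) i‖ ^ 2
      ≤ c ^ 2 * ∑ i, ‖x i‖ ^ 2 := by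
    rw [Finset.mul_sum]
    apply Finset.sum_le_sum
    intro i _
    have heq : ((WithLp.equiv 2 (Fin p → ℝ)).symm
        ((Matrix.diagonal s) *ᵥ (WithLp.equiv 2 (Fin p → ℝ)) x)) i = s i * x i := by
      simp [Matrix.mulVec_diagonal]
    rw [heq]
    have h1 := hcs i
    have h2 : |s i * x i| ≤ c * |x i| := by
      rw [abs_mul]
      exact mul_le_mul_of_nonneg_right h1 (abs_nonneg _)
    have h2 : ‖s i * x i‖ ^ 2 ≤ (c * ‖x i‖) ^ 2 := by
      rw [Real.norm_eq_abs, Real.norm_eq_abs]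
      nlinarith [abs_nonneg (s i * x i), abs_nonneg (x i)]
    calc ‖s i * x i‖ ^ 2 ≤ (c * ‖x i‖) ^ 2 := h2
      _ = c ^ 2 * ‖x i‖ ^ 2 := by ring
  calc Real.sqrt (∑ i, ‖((WithLp.equiv 2 (Fin p → ℝ)).symm
        ((Matrix.diagonal s) *ᵥ (WithLp.equiv 2 (Fin p → ℝ)) x)) i‖ ^ 2)
      ≤ Real.sqrt (c ^ 2 * ∑ i, ‖x i‖ ^ 2) := Real.sqrt_le_sqrt key
    _ = c * Real.sqrt (∑ i, ‖x i‖ ^ 2) := by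
        rw [Real.sqrt_mul (sq_nonneg c), Real.sqrt_sq hc0]

lemma quad_single {p : ℕ} (M : Matrix (Fin p) (Fin p) ℝ) (j : Fin p) :
    (Pi.single j 1 : Fin p → ℝ) ⬝ᵥ M.mulVec (Pi.single j 1) = M j j := by
  simp [Matrix.mulVec_single, single_dotProduct]

lemma sum_single_sq {p : ℕ} (j : Fin p) :
    ∑ i, ((Pi.single j 1 : Fin p → ℝ) i) ^ 2 = 1 := by
  simp [Pi.single_apply, apply_ite (· ^ 2)]

lemma rayleigh_bddAbove {p : ℕ} (A : Matrix (Fin p) (Fin p) ℝ) :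
    BddAbove {r | ∃ x : Fin p → ℝ, ∑ i, (x i) ^ 2 = 1 ∧ r = x ⬝ᵥ A.mulVec x} := by
  refine ⟨∑ i, ∑ j, |A i j|, ?_⟩
  rintro r ⟨x, hx, rfl⟩
  have hxi : ∀ i, |x i| ≤ 1 := by
    intro i
    have h1 : (x i) ^ 2 ≤ 1 := by
      rw [← hx]
      exact Finset.single_le_sum (fun i _ => sq_nonneg (x i)) (Finset.mem_univ i)
    nlinarith [sq_abs (x i), abs_nonneg (x i)]
  calc x ⬝ᵥ A.mulVec x ≤ |x ⬝ᵥ A.mulVec x| := le_abs_self _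
    _ ≤ ∑ i, |x i * (A.mulVec x) i| := Finset.abs_sum_le_sum_abs _ _
    _ ≤ ∑ i, ∑ j, |A i j| := by
        apply Finset.sum_le_sum
        intro i _
        rw [abs_mul]
        calc |x i| * |(A.mulVec x) i| ≤ 1 * |(A.mulVec x) i| :=
              mul_le_mul_of_nonneg_right (hxi i) (abs_nonneg _)
          _ = |∑ j, A i j * x j| := by rw [one_mul]; rfl
          _ ≤ ∑ j, |A i j * x j| := Finset.abs_sum_le_sum_abs _ _
          _ ≤ ∑ j, |A i j| := by
              apply Finset.sum_le_sum
              intro j _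
              rw [abs_mul]
              calc |A i j| * |x j| ≤ |A i j| * 1 :=
                    mul_le_mul_of_nonneg_left (hxi j) (abs_nonneg _)
                _ = |A i j| := mul_one _

lemma diag_le_lambdaMax {p : ℕ} (A : Matrix (Fin p) (Fin p) ℝ) (j : Fin p) :
    A j j ≤ lambdaMax A := by
  apply le_csSup (rayleigh_bddAbove A)
  exact ⟨Pi.single j 1, sum_single_sq j, (quad_single A j).symm⟩

lemma conj_sub {p : ℕ} {S' : Finset (Fin p)} (P : Matrix (Fin p) {j // j ∈ S'} ℝ)
    (X Y : Matrix (Fin p) (Fin p) ℝ) :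
    Pᵀ * X * P - Pᵀ * Y * P = Pᵀ * (X - Y) * P := by
  rw [Matrix.mul_sub, Matrix.sub_mul]

/-- difference of knockoff Gram matrices on a subset `S`. -/
theorem stmt_1 (p : ℕ) (hp : 0 < p)
    (Om Om₀ : Matrix (Fin p) (Fin p) ℝ) (s : Fin p → ℝ)
    (hs : ∀ j, 0 ≤ s j) (hOm : Om.IsSymm) (hOm₀ : Om₀.IsSymm)
    (hB : ((2 : ℝ) • Matrix.diagonal s -
      Matrix.diagonal s * Om * Matrix.diagonal s).PosSemidef)
    (hB₀ : ((2 : ℝ) • Matrix.diagonal s -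
      Matrix.diagonal s * Om₀ * Matrix.diagonal s).PosSemidef) :
    ∀ S : Finset (Fin p),
      ((colSub (Bmat s Om) S)ᵀ * colSub (Bmat s Om) S -
          (colSub (Bmat s Om₀) S)ᵀ * colSub (Bmat s Om₀) S =
        -prinSub (Matrix.diagonal s * (Om - Om₀) * Matrix.diagonal s) S) ∧
      specNorm ((colSub (Bmat s Om) S)ᵀ * colSub (Bmat s Om) S -
          (colSub (Bmat s Om₀) S)ᵀ * colSub (Bmat s Om₀) S) ≤
        (⨆ j, s j) ^ 2 * specNorm (Om - Om₀) ∧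
      (Om₀.PosDef → (Om₀⁻¹).PosDef →
        (Om₀⁻¹ - (1 / 2 : ℝ) • Matrix.diagonal s).PosSemidef →
        (⨆ j, s j) ^ 2 * specNorm (Om - Om₀) ≤
          4 * (lambdaMax (Om₀⁻¹)) ^ 2 * specNorm (Om - Om₀)) := by
  intro S
  set D : Matrix (Fin p) (Fin p) ℝ := Matrix.diagonal s with hD
  set A : Matrix (Fin p) (Fin p) ℝ := (2 : ℝ) • D - D * Om * D with hA
  set A₀ : Matrix (Fin p) (Fin p) ℝ := (2 : ℝ) • D - D * Om₀ * D with hA₀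
  set P := selP S with hP
  -- properties of the square roots
  have hsym : (Bmat s Om)ᵀ = Bmat s Om := by
    exact msqrt_transpose hB
  have hsym₀ : (Bmat s Om₀)ᵀ = Bmat s Om₀ := by
    exact msqrt_transpose hB₀
  have hmul : Bmat s Om * Bmat s Om = A := by exact msqrt_mul_self hB
  have hmul₀ : Bmat s Om₀ * Bmat s Om₀ = A₀ := by exact msqrt_mul_self hB₀
  have e1 : (colSub (Bmat s Om) S)ᵀ * colSub (Bmat s Om) S = Pᵀ * A * P := by
    rw [colSub_eq_mul, Matrix.transpose_mul, ← hP]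
    calc Pᵀ * (Bmat s Om)ᵀ * (Bmat s Om * P)
        = Pᵀ * ((Bmat s Om)ᵀ * Bmat s Om) * P := by
          simp only [Matrix.mul_assoc]
      _ = Pᵀ * A * P := by rw [hsym, hmul]
  have e1₀ : (colSub (Bmat s Om₀) S)ᵀ * colSub (Bmat s Om₀) S = Pᵀ * A₀ * P := by
    rw [colSub_eq_mul, Matrix.transpose_mul, ← hP]
    calc Pᵀ * (Bmat s Om₀)ᵀ * (Bmat s Om₀ * P)
        = Pᵀ * ((Bmat s Om₀)ᵀ * Bmat s Om₀) * P := by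
          simp only [Matrix.mul_assoc]
      _ = Pᵀ * A₀ * P := by rw [hsym₀, hmul₀]
  have hAA : A - A₀ = -(D * (Om - Om₀) * D) := by
    rw [hA, hA₀]
    rw [Matrix.mul_sub, Matrix.sub_mul]
    abel
  have keyEq : (colSub (Bmat s Om) S)ᵀ * colSub (Bmat s Om) S -
      (colSub (Bmat s Om₀) S)ᵀ * colSub (Bmat s Om₀) S =
      -prinSub (D * (Om - Om₀) * D) S := by
    rw [e1, e1₀, prinSub_eq_mul, ← hP]
    calc Pᵀ * A * P - Pᵀ * A₀ * P = Pᵀ * (A - A₀) * P := conj_sub P A A₀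
      _ = -(Pᵀ * (D * (Om - Om₀) * D) * P) := by
          rw [hAA, Matrix.mul_neg, Matrix.neg_mul]
  refine ⟨keyEq, ?_, ?_⟩
  · -- norm bound
    set c : ℝ := ⨆ j, s j with hc
    have hbdd : BddAbove (Set.range s) := Set.Finite.bddAbove (Set.finite_range s)
    have hc0 : 0 ≤ c := le_trans (hs ⟨0, hp⟩) (le_ciSup hbdd ⟨0, hp⟩)
    have hcs : ∀ j, |s j| ≤ c := fun j => by
      rw [abs_of_nonneg (hs j)]; exact le_ciSup hbdd j
    have hDn : ‖D‖ ≤ c := norm_diagonal_le' s c hc0 hcs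
    rw [keyEq, specNorm_eq_norm, norm_neg, prinSub_eq_mul, ← hP, specNorm_eq_norm]
    have hPn : ‖P‖ ≤ 1 := norm_selP_le S
    have hPtn : ‖Pᵀ‖ = ‖P‖ := norm_selP_transpose_eq S
    have hM1 : ‖D * (Om - Om₀) * D‖ ≤ c ^ 2 * ‖Om - Om₀‖ := by
      calc ‖D * (Om - Om₀) * D‖ ≤ ‖D * (Om - Om₀)‖ * ‖D‖ :=
            Matrix.l2_opNorm_mul (D * (Om - Om₀)) D
        _ ≤ (‖D‖ * ‖Om - Om₀‖) * ‖D‖ :=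
            mul_le_mul_of_nonneg_right (Matrix.l2_opNorm_mul D (Om - Om₀)) (norm_nonneg D)
        _ ≤ (c * ‖Om - Om₀‖) * c :=
            mul_le_mul (mul_le_mul_of_nonneg_right hDn (norm_nonneg _)) hDn (norm_nonneg D)
              (mul_nonneg hc0 (norm_nonneg _))
        _ = c ^ 2 * ‖Om - Om₀‖ := by ring
    calc ‖Pᵀ * (D * (Om - Om₀) * D) * P‖
        ≤ ‖Pᵀ * (D * (Om - Om₀) * D)‖ * ‖P‖ :=
          Matrix.l2_opNorm_mul (Pᵀ * (D * (Om - Om₀) * D)) P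
      _ ≤ (‖Pᵀ‖ * ‖D * (Om - Om₀) * D‖) * ‖P‖ :=
          mul_le_mul_of_nonneg_right (Matrix.l2_opNorm_mul Pᵀ (D * (Om - Om₀) * D))
            (norm_nonneg P)
      _ = (‖P‖ * ‖D * (Om - Om₀) * D‖) * ‖P‖ := by rw [hPtn]
      _ ≤ ((1 : ℝ) * ‖D * (Om - Om₀) * D‖) * 1 :=
          mul_le_mul (mul_le_mul_of_nonneg_right hPn (norm_nonneg _)) hPn (norm_nonneg P)
            (mul_nonneg zero_le_one (norm_nonneg _))
      _ = ‖D * (Om - Om₀) * D‖ := by ring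
      _ ≤ c ^ 2 * ‖Om - Om₀‖ := hM1
  · -- lambdaMax bound
    intro _ _ hSigS
    haveI : Nonempty (Fin p) := ⟨⟨0, hp⟩⟩
    have hbdd : BddAbove (Set.range s) := Set.Finite.bddAbove (Set.finite_range s)
    have hc0 : (0 : ℝ) ≤ ⨆ j, s j := le_trans (hs ⟨0, hp⟩) (le_ciSup hbdd ⟨0, hp⟩)
    have hlam : ∀ j, s j ≤ 2 * lambdaMax Om₀⁻¹ := by
      intro j
      have h0 : 2⁻¹ * D j j ≤ Om₀⁻¹ j j := by
        have := hSigS.dotProduct_mulVec_nonneg (Pi.single j 1 : Fin p → ℝ)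
        simpa using this
      have hDjj : D j j = s j := by rw [hD]; exact Matrix.diagonal_apply_eq s j
      rw [hDjj] at h0
      have hdl := diag_le_lambdaMax Om₀⁻¹ j
      linarith
    have hclam : (⨆ j, s j) ≤ 2 * lambdaMax Om₀⁻¹ := ciSup_le hlam
    have hsn : 0 ≤ specNorm (Om - Om₀) := by
      rw [specNorm_eq_norm]; exact norm_nonneg _
    have hkey : (0:ℝ) ≤ (2 * lambdaMax Om₀⁻¹ - ⨆ j, s j) *
        (2 * lambdaMax Om₀⁻¹ + ⨆ j, s j) * specNorm (Om - Om₀) :=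
      mul_nonneg (mul_nonneg (by linarith) (by linarith)) hsn
    nlinarith [hc0, hclam, hsn, hkey]

end
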